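/- (Auxiliary function for min-vol KL-NMF.) Let V ∈ ℝ^{F×N} have strictly positive entries, H ∈ ℝ_+^{K×N}, λ > 0, δ > 0, and let W̃ ∈ ℝ^{F×K} have strictly positive entries with (W̃H)_{fn} > 0 for all f, n. Set Y = (W̃ᵀW̃ + δI)⁻¹, write Y = Y⁺ − Y⁻ with Y⁺ = max(Y,0), Y⁻ = max(−Y,0) entrywise, and for each row index f let w̃_f denote the f-th row of W̃. Define F̄(W | W̃) = Σ_f G(w_f | w̃_f) + λ·( tr(Y(WᵀW + δI)) + logdet(Y⁻¹) − K ), where G(w_f | w̃_f) = Σ_n Σ_k (w̃_{fk} h_{kn}/(W̃H)_{fn})·d_KL(V_{fn} | (W̃H)_{fn} w_{fk}/w̃_{fk}) is the Jensen majorizer of the KL term on row f. Then for every W ∈ ℝ^{F×K} with strictly positive entries, F̄(W | W̃) ≥ F(W) := Σ_{f,n} d_KL(V_{fn} | (WH)_{fn}) + λ·logdet(WᵀW + δI), with equality when W = W̃. -/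

import Mathlib

/-!
Both parts of `F̄` are tangent majorizers. For the KL part, `(W H)_{fn}` is a convex combination,
with weights `w̃_{fk} h_{kn} / (W̃ H)_{fn}`, of the points `(W̃ H)_{fn} w_{fk} / w̃_{fk}`, and
`y ↦ d_KL(x | y)` is convex, so Jensen's inequality bounds each term. For the volume part,
`logdet` is concave: for positive definite `P, Q` the eigenvalues `μ` of `Q^(-1/2) P Q^(-1/2)` are
positive and `log μ ≤ μ - 1` gives `logdet P ≤ tr(Q⁻¹ P) + logdet Q - K`; take
`P = WᵀW + δI`, `Q = W̃ᵀW̃ + δI = Y⁻¹`. At `W = W̃` both bounds are equalities.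
-/

open Matrix

noncomputable def dKL (x y : ℝ) : ℝ := x * Real.log (x / y) - x + y

open Set Finset

lemma dKL_eq_of_ne_zero {x y : ℝ} (hy : y ≠ 0) :
    dKL x y = x * Real.log x - x - x * Real.log y + y := by
  rcases eq_or_ne x 0 with rfl | hx
  · simp [dKL]
  · rw [dKL, Real.log_div hx hy]
    ring

lemma convexOn_dKL {x : ℝ} (hx : 0 ≤ x) : ConvexOn ℝ (Ioi 0) (dKL x) := by
  have h := ((strictConcaveOn_log_Ioi.concaveOn.neg.smul hx).add
    (convexOn_id (convex_Ioi (0 : ℝ)))).add_const (x * Real.log x - x)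
  refine h.congr fun y hy => ?_
  simp only [dKL_eq_of_ne_zero (mem_Ioi.mp hy).ne', Pi.add_apply, Pi.neg_apply, smul_eq_mul, id]
  ring

lemma sum_mul_apply_div_eq_one {m l p : Type*} [Fintype l] {A : Matrix m l ℝ}
    {B : Matrix l p ℝ} {i : m} {j : p} (h : (A * B) i j ≠ 0) :
    ∑ k, A i k * B k j / (A * B) i j = 1 := by
  rw [← Finset.sum_div, ← mul_apply, div_self h]

lemma dKL_mul_apply_le {m l p : Type*} [Fintype l] {A W : Matrix m l ℝ} {B : Matrix l p ℝ}
    {i : m} {j : p} {x : ℝ} (hx : 0 ≤ x) (hA : ∀ k, 0 < A i k) (hB : ∀ k, 0 ≤ B k j)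
    (hW : ∀ k, 0 < W i k) (hAB : 0 < (A * B) i j) :
    dKL x ((W * B) i j) ≤
      ∑ k, (A i k * B k j / (A * B) i j) * dKL x ((A * B) i j * W i k / A i k) := by
  have hWB : (W * B) i j =
      ∑ k, (A i k * B k j / (A * B) i j) * ((A * B) i j * W i k / A i k) := by
    rw [mul_apply]
    refine Finset.sum_congr rfl fun k _ => ?_
    field_simp [hAB.ne', (hA k).ne']
  rw [hWB]
  exact (convexOn_dKL hx).map_sum_le
    (fun k _ => div_nonneg (mul_nonneg (hA k).le (hB k)) hAB.le)
    (sum_mul_apply_div_eq_one hAB.ne') fun k _ => div_pos (mul_pos hAB (hW k)) (hA k)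

lemma sum_dKL_mul_apply_self {m l p : Type*} [Fintype l] {A : Matrix m l ℝ} {B : Matrix l p ℝ}
    {i : m} {j : p} (x : ℝ) (hA : ∀ k, A i k ≠ 0) (hAB : (A * B) i j ≠ 0) :
    ∑ k, (A i k * B k j / (A * B) i j) * dKL x ((A * B) i j * A i k / A i k) =
      dKL x ((A * B) i j) := by
  simp only [mul_div_cancel_right₀ _ (hA _), ← Finset.sum_mul, sum_mul_apply_div_eq_one hAB,
    one_mul]

variable {n : Type*} [Fintype n] [DecidableEq n]

lemma Matrix.PosDef.log_det_le_trace_sub_card {M : Matrix n n ℝ} (hM : M.PosDef) :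
    Real.log M.det ≤ M.trace - Fintype.card n := by
  have hpos := hM.eigenvalues_pos
  rw [hM.isHermitian.det_eq_prod_eigenvalues, hM.isHermitian.trace_eq_sum_eigenvalues]
  simp only [RCLike.ofReal_real_eq_id, id]
  rw [Real.log_prod fun i _ => (hpos i).ne']
  calc ∑ i, Real.log (hM.isHermitian.eigenvalues i)
      ≤ ∑ i, (hM.isHermitian.eigenvalues i - 1) :=
        Finset.sum_le_sum fun i _ => Real.log_le_sub_one_of_pos (hpos i)
    _ = _ := by simp [Finset.sum_sub_distrib]

open scoped MatrixOrder in
lemma Matrix.PosDef.log_det_le_trace_inv_mul {P Q : Matrix n n ℝ} (hP : P.PosDef)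
    (hQ : Q.PosDef) :
    Real.log P.det ≤ (Q⁻¹ * P).trace + Real.log Q.det - Fintype.card n := by
  set R := CFC.sqrt Q⁻¹
  have hRR : R * R = Q⁻¹ := CFC.sqrt_mul_sqrt_self _ hQ.inv.posSemidef.nonneg
  have hRH : Rᵀ = R := (CFC.sqrt_nonneg Q⁻¹).posSemidef.isHermitian
  have hR : IsUnit R := isUnit_of_mul_isUnit_left (hRR ▸ hQ.inv.isUnit)
  have hM : (R * P * R).PosDef := by
    simpa [hRH] using hP.mul_mul_conjTranspose_same (vecMul_injective_of_isUnit hR)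
  have hdet : (R * P * R).det = P.det / Q.det := by
    rw [det_mul, det_mul, mul_right_comm, ← det_mul, hRR, det_nonsing_inv, Ring.inverse_eq_inv']
    ring
  have htr : (R * P * R).trace = (Q⁻¹ * P).trace := by
    rw [trace_mul_comm, ← mul_assoc, hRR]
  have := hM.log_det_le_trace_sub_card
  rw [hdet, htr, Real.log_div hP.det_pos.ne' hQ.det_pos.ne'] at this
  linarith

lemma posDef_transpose_mul_self_add_smul_one {m : Type*} [Fintype m] (W : Matrix m n ℝ) {δ : ℝ}
    (hδ : 0 < δ) : (Wᵀ * W + δ • (1 : Matrix n n ℝ)).PosDef := by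
  refine PosDef.posSemidef_add (posSemidef_conjTranspose_mul_self W) ?_
  rw [smul_one_eq_diagonal]
  exact posDef_diagonal_iff.mpr fun _ => hδ

/-- Auxiliary function for min-vol KL-NMF: with `V > 0`, `H ≥ 0`, `λ, δ > 0`,
`W̃ > 0` with `W̃H > 0`, and `Y = (W̃ᵀW̃ + δI)⁻¹`, the function
`F̄(W|W̃) = Σ_f G(w_f|w̃_f) + λ(tr(Y(WᵀW + δI)) + logdet(Y⁻¹) − K)`,
where `G` is the Jensen majorizer of the KL term on each row, satisfies
`F̄(W|W̃) ≥ F(W) = Σ_{f,n} d_KL(V_{fn} | (WH)_{fn}) + λ logdet(WᵀW + δI)`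
for every entrywise positive `W`, with equality at `W = W̃`. -/
theorem minvol_KL_NMF_auxiliary {F K N : ℕ}
    (V : Matrix (Fin F) (Fin N) ℝ) (hV : ∀ f n, 0 < V f n)
    (H : Matrix (Fin K) (Fin N) ℝ) (hH : ∀ k n, 0 ≤ H k n)
    (lam δ : ℝ) (hlam : 0 < lam) (hδ : 0 < δ)
    (Wt : Matrix (Fin F) (Fin K) ℝ) (hWt : ∀ f k, 0 < Wt f k)
    (hWtH : ∀ f n, 0 < (Wt * H) f n)
    (Y : Matrix (Fin K) (Fin K) ℝ)
    (hY : Y = (Wtᵀ * Wt + δ • (1 : Matrix (Fin K) (Fin K) ℝ))⁻¹)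
    (Fobj Fbar : Matrix (Fin F) (Fin K) ℝ → ℝ)
    (hFobj : ∀ W, Fobj W =
      (∑ f, ∑ n, dKL (V f n) ((W * H) f n))
        + lam * Real.log (Wᵀ * W + δ • (1 : Matrix (Fin K) (Fin K) ℝ)).det)
    (hFbar : ∀ W, Fbar W =
      (∑ f, ∑ n, ∑ k,
        (Wt f k * H k n / (Wt * H) f n) * dKL (V f n) ((Wt * H) f n * W f k / Wt f k))
        + lam * ((Y * (Wᵀ * W + δ • (1 : Matrix (Fin K) (Fin K) ℝ))).trace
            + Real.log (Y⁻¹).det - K)) :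
    (∀ W : Matrix (Fin F) (Fin K) ℝ, (∀ f k, 0 < W f k) → Fobj W ≤ Fbar W) ∧
    Fbar Wt = Fobj Wt := by
  set Q := Wtᵀ * Wt + δ • (1 : Matrix (Fin K) (Fin K) ℝ)
  have hQ : Q.PosDef := posDef_transpose_mul_self_add_smul_one Wt hδ
  have hQdet : IsUnit Q.det := hQ.det_pos.ne'.isUnit
  subst hY
  simp only [hFobj, hFbar, nonsing_inv_nonsing_inv _ hQdet]
  constructor
  · intro W hW
    have hKL : ∑ f, ∑ n, dKL (V f n) ((W * H) f n) ≤ ∑ f, ∑ n, ∑ k,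
        (Wt f k * H k n / (Wt * H) f n) * dKL (V f n) ((Wt * H) f n * W f k / Wt f k) :=
      sum_le_sum fun f _ => sum_le_sum fun n _ =>
        dKL_mul_apply_le (hV f n).le (hWt f) (hH · n) (hW f) (hWtH f n)
    have hLD := (posDef_transpose_mul_self_add_smul_one W hδ).log_det_le_trace_inv_mul hQ
    rw [Fintype.card_fin] at hLD
    linarith [mul_le_mul_of_nonneg_left hLD hlam.le]
  · rw [nonsing_inv_mul _ hQdet, trace_one, Fintype.card_fin]
    simp only [sum_dKL_mul_apply_self _ (fun k => (hWt _ k).ne') (hWtH _ _).ne']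
    ring
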